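/- Let μ be a positive measure on ℂ carried by the disc D = {ξ ∈ ℂ : |ξ|² < R} satisfying the moment conditions ∫_D ξ^n conj(ξ)^m e_q(|ξ|²)^{-1} dμ(ξ) = π [n]_q! if n = m and = 0 if n ≠ m, for all n, m ∈ ℕ. Let b : ℕ → ℂ satisfy Σ_n |b(n)| < ∞, and define f : D → ℂ by f(ξ) = Σ_{n=0}^∞ b(n) ξ^n/√([n]_q!) (this series converges absolutely on D). Then for every z with |z|² < R, the function ξ ↦ K(z, ξ) f(ξ) is μ-integrable and the self-reproducing property holds: ∫_D K(z, ξ) f(ξ) dμ(ξ) = f(z), where K(z, ξ) = (1/π) e_q(|ξ|²)^{-1} e_q(conj(ξ) z). -/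

import Mathlib

/-!
Expand `K(z, ξ) f(ξ) = π⁻¹ e_q(|ξ|²)⁻¹ ∑ₘ (conj(ξ) z)^m/[m]_q! · ∑ₙ b(n) ξ^n/√[n]_q!` as an
absolutely convergent double series in the weighted monomials `ξ^n conj(ξ)^m e_q(|ξ|²)⁻¹`.
Cauchy–Schwarz together with the diagonal moments `π [n]_q!` bounds the `L¹(μ)` norm of the
`(n, m)` term by `|b(n)| |z|^m/√[m]_q!`, which is summable, so the series may be integrated
termwise; orthogonality of the moments then leaves exactly the diagonal terms
`b(n) z^n/√[n]_q!`, whose sum is `f(z)`.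
-/

open scoped BigOperators

/-- The q-number `[n]_q = (1 - q^n)/(1 - q)`. -/
noncomputable def qnum (q : ℝ) (n : ℕ) : ℝ := (1 - q ^ n) / (1 - q)

/-- The q-factorial `[n]_q! = [1]_q [2]_q ⋯ [n]_q`, with `[0]_q! = 1`. -/
noncomputable def qfact (q : ℝ) : ℕ → ℝ
  | 0 => 1
  | n + 1 => qfact q n * qnum q (n + 1)

/-- The complex q-exponential `e_q(w) = ∑ w^n/[n]_q!`. -/
noncomputable def qexC (q : ℝ) (w : ℂ) : ℂ := ∑' n : ℕ, w ^ n / (qfact q n : ℂ)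

/-- The real q-exponential `e_q(x) = ∑ x^n/[n]_q!`. -/
noncomputable def qexR (q : ℝ) (x : ℝ) : ℝ := ∑' n : ℕ, x ^ n / qfact q n

open MeasureTheory

/-- The self-reproducing kernel `K(u,v) = (1/π) e_q(|v|²)^{-1} e_q(conj(v) u)`. -/
noncomputable def Kker (q : ℝ) (u v : ℂ) : ℂ :=
  ((Real.pi : ℝ) : ℂ)⁻¹ * (((qexR q (‖v‖ ^ 2))⁻¹ : ℝ) : ℂ) * qexC q ((starRingEnd ℂ) v * u)

open Filter Topology

theorem summable_pow_div_of_succ_eq_mul {d r : ℕ → ℝ} (hd : ∀ n, 0 < d n)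
    (hdr : ∀ n, d (n + 1) = d n * r (n + 1)) (hr : Monotone r) {x : ℝ} (hx : 0 ≤ x) {N : ℕ}
    (hxN : x < r N) : Summable fun n => x ^ n / d n := by
  have hrN : 0 < r N := hx.trans_lt hxN
  refine summable_of_ratio_norm_eventually_le ((div_lt_one hrN).mpr hxN) ?_
  filter_upwards [eventually_ge_atTop N] with n hn
  have hrn : r N ≤ r (n + 1) := hr (hn.trans n.le_succ)
  have hd0 := hd n
  have hd1 := hd (n + 1)
  rw [Real.norm_of_nonneg (by positivity), Real.norm_of_nonneg (by positivity), hdr, pow_succ,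
    mul_div_mul_comm, mul_comm]
  gcongr

section QNumbers

variable {q : ℝ}

theorem qnum_monotone (hq0 : 0 ≤ q) (hq1 : q < 1) : Monotone (qnum q) := fun _ _ h =>
  div_le_div_of_nonneg_right (sub_le_sub_left (pow_le_pow_of_le_one hq0 hq1.le h) 1)
    (sub_pos.mpr hq1).le

theorem qnum_succ_pos (hq0 : 0 ≤ q) (hq1 : q < 1) (n : ℕ) : 0 < qnum q (n + 1) :=
  div_pos (sub_pos.mpr (pow_lt_one₀ hq0 hq1 n.succ_ne_zero)) (sub_pos.mpr hq1)

theorem qfact_pos (hq0 : 0 ≤ q) (hq1 : q < 1) : ∀ n, 0 < qfact q n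
  | 0 => one_pos
  | n + 1 => mul_pos (qfact_pos hq0 hq1 n) (qnum_succ_pos hq0 hq1 n)

theorem tendsto_qnum (hq0 : 0 ≤ q) (hq1 : q < 1) :
    Tendsto (qnum q) atTop (𝓝 (1 / (1 - q))) := by
  have := ((tendsto_pow_atTop_nhds_zero_of_lt_one hq0 hq1).const_sub 1).div_const (1 - q)
  rwa [sub_zero] at this

theorem summable_pow_div_qfact (hq0 : 0 ≤ q) (hq1 : q < 1) {x : ℝ} (hx0 : 0 ≤ x)
    (hx : x < 1 / (1 - q)) : Summable fun n => x ^ n / qfact q n :=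
  have ⟨_, hN⟩ := ((tendsto_qnum hq0 hq1).eventually_const_lt hx).exists
  summable_pow_div_of_succ_eq_mul (qfact_pos hq0 hq1) (fun _ => rfl) (qnum_monotone hq0 hq1) hx0 hN

theorem summable_pow_div_sqrt_qfact (hq0 : 0 ≤ q) (hq1 : q < 1) {x : ℝ} (hx0 : 0 ≤ x)
    (hx : x ^ 2 < 1 / (1 - q)) : Summable fun n => x ^ n / √(qfact q n) := by
  obtain ⟨N, hN⟩ := ((tendsto_qnum hq0 hq1).eventually_const_lt hx).exists
  refine summable_pow_div_of_succ_eq_mul (fun n => Real.sqrt_pos.mpr (qfact_pos hq0 hq1 n))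
    (fun n => Real.sqrt_mul (qfact_pos hq0 hq1 n).le _)
    (Real.sqrt_monotone.comp (qnum_monotone hq0 hq1)) hx0 (N := N) ?_
  exact Real.lt_sqrt hx0 |>.mpr hN

theorem qexR_nonneg (hq0 : 0 ≤ q) (hq1 : q < 1) {x : ℝ} (hx : 0 ≤ x) : 0 ≤ qexR q x :=
  tsum_nonneg fun n => div_nonneg (pow_nonneg hx n) (qfact_pos hq0 hq1 n).le

end QNumbers

section Integration

variable {α E : Type*} [MeasurableSpace α] {ν : Measure α}

theorem integral_mul_mul_le_sqrt_mul_sqrt {f g w : α → ℝ} (hw : ∀ a, 0 ≤ w a)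
    (hfg : Integrable (fun a => f a * g a * w a) ν) (hf : Integrable (fun a => f a ^ 2 * w a) ν)
    (hg : Integrable (fun a => g a ^ 2 * w a) ν) (hf0 : 0 < ∫ a, f a ^ 2 * w a ∂ν)
    (hg0 : 0 < ∫ a, g a ^ 2 * w a ∂ν) :
    ∫ a, f a * g a * w a ∂ν ≤ √(∫ a, f a ^ 2 * w a ∂ν) * √(∫ a, g a ^ 2 * w a ∂ν) := by
  set A := √(∫ a, f a ^ 2 * w a ∂ν)
  set B := √(∫ a, g a ^ 2 * w a ∂ν)
  have hA : 0 < A := Real.sqrt_pos.mpr hf0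
  have hB : 0 < B := Real.sqrt_pos.mpr hg0
  -- weighted AM-GM `2 f g ≤ f² / s + s g²` with the optimal `s = A / B`
  have hamgm : ∀ a, f a * g a * w a ≤ (f a ^ 2 * w a * (B / A) + g a ^ 2 * w a * (A / B)) / 2 := by
    intro a
    have hgap : (f a ^ 2 * w a * (B / A) + g a ^ 2 * w a * (A / B)) / 2 - f a * g a * w a
        = w a * (B * f a - A * g a) ^ 2 / (2 * A * B) := by
      field_simp
      ring
    have : 0 ≤ w a * (B * f a - A * g a) ^ 2 / (2 * A * B) := by have := hw a; positivity
    linarith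
  calc ∫ a, f a * g a * w a ∂ν
      ≤ ∫ a, (f a ^ 2 * w a * (B / A) + g a ^ 2 * w a * (A / B)) / 2 ∂ν :=
        integral_mono hfg (((hf.mul_const _).add (hg.mul_const _)).div_const _) hamgm
    _ = ((A ^ 2) * (B / A) + (B ^ 2) * (A / B)) / 2 := by
        rw [integral_div, integral_add (hf.mul_const _) (hg.mul_const _), integral_mul_const,
          integral_mul_const, Real.sq_sqrt hf0.le, Real.sq_sqrt hg0.le]
    _ = A * B := by field_simp; ring

theorem integrable_tsum_of_summable_integral_norm [NormedAddCommGroup E] [NormedSpace ℝ E]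
    [CompleteSpace E] {ι : Type*} [Countable ι] {F : ι → α → E}
    (hF_int : ∀ i, Integrable (F i) ν) (hF_sum : Summable fun i => ∫ a, ‖F i a‖ ∂ν) :
    Integrable (fun a => ∑' i, F i a) ν := by
  refine ⟨AEStronglyMeasurable.tsum fun i => (hF_int i).1, ?_⟩
  calc ∫⁻ a, ‖∑' i, F i a‖ₑ ∂ν
      ≤ ∫⁻ a, ∑' i, ‖F i a‖ₑ ∂ν := lintegral_mono fun a => enorm_tsum_le_tsum_enorm
    _ = ∑' i, ENNReal.ofReal (∫ a, ‖F i a‖ ∂ν) := by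
        rw [lintegral_tsum fun i => (hF_int i).1.enorm]
        exact tsum_congr fun i => (ofReal_integral_norm_eq_lintegral_enorm (hF_int i)).symm
    _ = ENNReal.ofReal (∑' i, ∫ a, ‖F i a‖ ∂ν) :=
        (ENNReal.ofReal_tsum_of_nonneg (fun i => integral_nonneg fun a => norm_nonneg _)
          hF_sum).symm
    _ < ⊤ := ENNReal.ofReal_lt_top

end Integration

noncomputable def qWeightedMonomial (q : ℝ) (n m : ℕ) (ξ : ℂ) : ℂ :=
  ξ ^ n * (starRingEnd ℂ ξ) ^ m * (((qexR q (‖ξ‖ ^ 2))⁻¹ : ℝ) : ℂ)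

section Moments

variable {q : ℝ}

theorem norm_qWeightedMonomial (hq0 : 0 ≤ q) (hq1 : q < 1) (n m : ℕ) (ξ : ℂ) :
    ‖qWeightedMonomial q n m ξ‖ = ‖ξ‖ ^ n * ‖ξ‖ ^ m * (qexR q (‖ξ‖ ^ 2))⁻¹ := by
  rw [qWeightedMonomial, norm_mul, norm_mul, norm_pow, norm_pow, RCLike.norm_conj,
    Complex.norm_real, Real.norm_of_nonneg (inv_nonneg.mpr (qexR_nonneg hq0 hq1 (by positivity)))]

theorem qWeightedMonomial_self (n : ℕ) (ξ : ℂ) :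
    qWeightedMonomial q n n ξ = (((‖ξ‖ ^ n) ^ 2 * (qexR q (‖ξ‖ ^ 2))⁻¹ : ℝ) : ℂ) := by
  rw [qWeightedMonomial, ← mul_pow, Complex.mul_conj, Complex.normSq_eq_norm_sq]
  push_cast
  ring

variable {ν : Measure ℂ}

theorem integral_norm_qWeightedMonomial_le (hq0 : 0 ≤ q) (hq1 : q < 1)
    (hint : ∀ n m, Integrable (qWeightedMonomial q n m) ν)
    (hdiag : ∀ n, ∫ ξ, qWeightedMonomial q n n ξ ∂ν = Real.pi * qfact q n) (n m : ℕ) :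
    ∫ ξ, ‖qWeightedMonomial q n m ξ‖ ∂ν ≤ √(Real.pi * qfact q n) * √(Real.pi * qfact q m) := by
  have hint_sq : ∀ k, Integrable (fun ξ : ℂ => (‖ξ‖ ^ k) ^ 2 * (qexR q (‖ξ‖ ^ 2))⁻¹) ν :=
    fun k => by
      simpa only [qWeightedMonomial_self, RCLike.re_to_complex, Complex.ofReal_re]
        using (hint k k).re
  have hdiag_sq : ∀ k, ∫ ξ, (‖ξ‖ ^ k) ^ 2 * (qexR q (‖ξ‖ ^ 2))⁻¹ ∂ν = Real.pi * qfact q k := by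
    intro k
    have := hdiag k
    simp only [qWeightedMonomial_self] at this
    rw [integral_complex_ofReal] at this
    exact_mod_cast this
  have hpos : ∀ k, 0 < Real.pi * qfact q k := fun k => mul_pos Real.pi_pos (qfact_pos hq0 hq1 k)
  simp only [norm_qWeightedMonomial hq0 hq1, ← hdiag_sq]
  refine integral_mul_mul_le_sqrt_mul_sqrt
    (fun ξ => inv_nonneg.mpr (qexR_nonneg hq0 hq1 (by positivity))) ?_ (hint_sq n) (hint_sq m)
    (by rw [hdiag_sq]; exact hpos n) (by rw [hdiag_sq]; exact hpos m)
  simpa only [norm_qWeightedMonomial hq0 hq1] using (hint n m).norm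

end Moments

/-- The coefficient of `ξ^n conj(ξ)^m e_q(|ξ|²)^{-1}` in the expansion of `K(z, ξ) f(ξ)`. -/
noncomputable def kernelCoeff (q : ℝ) (b : ℕ → ℂ) (z : ℂ) (p : ℕ × ℕ) : ℂ :=
  ((Real.pi : ℝ) : ℂ)⁻¹ * (b p.1 / ((√(qfact q p.1) : ℝ) : ℂ)) * (z ^ p.2 / (qfact q p.2 : ℂ))

section KernelExpansion

variable {q : ℝ} {b : ℕ → ℂ} {z : ℂ}

theorem summable_norm_mul_pow_div_sqrt_qfact (hq0 : 0 ≤ q) (hq1 : q < 1)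
    (hb : Summable fun n => ‖b n‖) {ξ : ℂ} (hξ : ‖ξ‖ ^ 2 < 1 / (1 - q)) :
    Summable fun n => ‖b n * ξ ^ n / ((√(qfact q n) : ℝ) : ℂ)‖ := by
  have hs := summable_pow_div_sqrt_qfact hq0 hq1 (norm_nonneg ξ) hξ
  refine (hb.mul_right (∑' k, ‖ξ‖ ^ k / √(qfact q k))).of_nonneg_of_le (fun n => norm_nonneg _)
    fun n => ?_
  rw [norm_div, norm_mul, norm_pow, Complex.norm_real, Real.norm_of_nonneg (Real.sqrt_nonneg _),
    mul_div_assoc]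
  exact mul_le_mul_of_nonneg_left (hs.le_tsum n fun k _ => by positivity) (norm_nonneg _)

theorem summable_norm_pow_div_qfact (hq0 : 0 ≤ q) (hq1 : q < 1) {w : ℂ}
    (hw : ‖w‖ < 1 / (1 - q)) : Summable fun n => ‖w ^ n / (qfact q n : ℂ)‖ := by
  refine (summable_pow_div_qfact hq0 hq1 (norm_nonneg w) hw).congr fun n => ?_
  rw [norm_div, norm_pow, Complex.norm_real, Real.norm_of_nonneg (qfact_pos hq0 hq1 n).le]

theorem hasSum_kernelCoeff_mul_qWeightedMonomial (hq0 : 0 ≤ q) (hq1 : q < 1)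
    (hb : Summable fun n => ‖b n‖) (hz : ‖z‖ ^ 2 < 1 / (1 - q)) {ξ : ℂ}
    (hξ : ‖ξ‖ ^ 2 < 1 / (1 - q)) :
    HasSum (fun p => kernelCoeff q b z p * qWeightedMonomial q p.1 p.2 ξ)
      (Kker q z ξ * ∑' n, b n * ξ ^ n / ((√(qfact q n) : ℝ) : ℂ)) := by
  have hw : ‖starRingEnd ℂ ξ * z‖ < 1 / (1 - q) := by
    rw [norm_mul, RCLike.norm_conj]
    nlinarith [sq_nonneg (‖ξ‖ - ‖z‖)]
  have hf := summable_norm_mul_pow_div_sqrt_qfact hq0 hq1 hb hξ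
  have he := summable_norm_pow_div_qfact hq0 hq1 hw
  have hprod := (summable_mul_of_summable_norm hf he).hasSum
  rw [← tsum_mul_tsum_of_summable_norm hf he] at hprod
  set c := ((Real.pi : ℝ) : ℂ)⁻¹ * (((qexR q (‖ξ‖ ^ 2))⁻¹ : ℝ) : ℂ)
  have hterm : (fun p : ℕ × ℕ => kernelCoeff q b z p * qWeightedMonomial q p.1 p.2 ξ) =
      fun p => c * (b p.1 * ξ ^ p.1 / ((√(qfact q p.1) : ℝ) : ℂ) *
        ((starRingEnd ℂ ξ * z) ^ p.2 / (qfact q p.2 : ℂ))) := by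
    ext p
    simp only [kernelCoeff, qWeightedMonomial, mul_pow, c]
    ring
  have hsum : Kker q z ξ * ∑' n, b n * ξ ^ n / ((√(qfact q n) : ℝ) : ℂ) =
      c * ((∑' n, b n * ξ ^ n / ((√(qfact q n) : ℝ) : ℂ)) * qexC q (starRingEnd ℂ ξ * z)) := by
    simp only [Kker, c]
    ring
  rw [hterm, hsum, qexC]
  exact hprod.mul_left c

end KernelExpansion

section KernelIntegral

variable {q : ℝ} {b : ℕ → ℂ} {z : ℂ} {ν : Measure ℂ}

theorem norm_kernelCoeff_mul_sqrt_mul_sqrt (hq0 : 0 ≤ q) (hq1 : q < 1) (p : ℕ × ℕ) :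
    ‖kernelCoeff q b z p‖ * (√(Real.pi * qfact q p.1) * √(Real.pi * qfact q p.2)) =
      ‖b p.1‖ * (‖z‖ ^ p.2 / √(qfact q p.2)) := by
  have h1 := Real.sqrt_pos.mpr (qfact_pos hq0 hq1 p.1)
  have h2 := Real.sqrt_pos.mpr (qfact_pos hq0 hq1 p.2)
  have hπ := Real.sqrt_pos.mpr Real.pi_pos
  simp only [kernelCoeff, norm_mul, norm_div, norm_inv, norm_pow, Complex.norm_real,
    Real.norm_of_nonneg Real.pi_pos.le, Real.norm_of_nonneg h1.le,
    Real.norm_of_nonneg (qfact_pos hq0 hq1 p.2).le, Real.sqrt_mul Real.pi_pos.le]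
  rw [← Real.sq_sqrt Real.pi_pos.le, ← Real.sq_sqrt (qfact_pos hq0 hq1 p.2).le]
  field_simp
  rw [Real.sqrt_sq hπ.le, Real.sqrt_sq h2.le]
  ring

theorem summable_integral_norm_kernelCoeff_mul (hq0 : 0 ≤ q) (hq1 : q < 1)
    (hint : ∀ n m, Integrable (qWeightedMonomial q n m) ν)
    (hdiag : ∀ n, ∫ ξ, qWeightedMonomial q n n ξ ∂ν = Real.pi * qfact q n)
    (hb : Summable fun n => ‖b n‖) (hz : ‖z‖ ^ 2 < 1 / (1 - q)) :
    Summable fun p : ℕ × ℕ =>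
      ∫ ξ, ‖kernelCoeff q b z p * qWeightedMonomial q p.1 p.2 ξ‖ ∂ν := by
  refine (hb.mul_of_nonneg (summable_pow_div_sqrt_qfact hq0 hq1 (norm_nonneg z) hz)
    (fun n => norm_nonneg _) fun m => by positivity).of_nonneg_of_le
    (fun p => integral_nonneg fun ξ => norm_nonneg _) fun p => ?_
  simp only [norm_mul, integral_const_mul, ← norm_kernelCoeff_mul_sqrt_mul_sqrt hq0 hq1 p]
  exact mul_le_mul_of_nonneg_left
    (integral_norm_qWeightedMonomial_le hq0 hq1 hint hdiag p.1 p.2) (norm_nonneg _)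

theorem hasSum_integral_kernelCoeff_mul (hq0 : 0 ≤ q) (hq1 : q < 1)
    (hmom : ∀ n m, ∫ ξ, qWeightedMonomial q n m ξ ∂ν =
      if n = m then ((Real.pi : ℝ) : ℂ) * (qfact q n : ℂ) else 0)
    (hb : Summable fun n => ‖b n‖) (hz : ‖z‖ ^ 2 < 1 / (1 - q)) :
    HasSum (fun p : ℕ × ℕ => ∫ ξ, kernelCoeff q b z p * qWeightedMonomial q p.1 p.2 ξ ∂ν)
      (∑' n, b n * z ^ n / ((√(qfact q n) : ℝ) : ℂ)) := by
  simp only [integral_const_mul, hmom]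
  -- only the diagonal `n = m` survives the orthogonality relations
  have hinj : Function.Injective fun n : ℕ => (n, n) := fun _ _ h => (Prod.ext_iff.mp h).1
  rw [← hinj.hasSum_iff]
  · have hterm : (fun p : ℕ × ℕ => kernelCoeff q b z p *
          if p.1 = p.2 then ((Real.pi : ℝ) : ℂ) * (qfact q p.1 : ℂ) else 0) ∘ (fun n => (n, n)) =
        fun n => b n * z ^ n / ((√(qfact q n) : ℝ) : ℂ) := by
      ext n
      have hf : (qfact q n : ℂ) ≠ 0 := Complex.ofReal_ne_zero.mpr (qfact_pos hq0 hq1 n).ne'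
      have hπ : ((Real.pi : ℝ) : ℂ) ≠ 0 := Complex.ofReal_ne_zero.mpr Real.pi_ne_zero
      simp only [Function.comp_apply, if_true, kernelCoeff]
      field_simp
    rw [hterm]
    exact (summable_norm_mul_pow_div_sqrt_qfact hq0 hq1 hb hz).of_norm.hasSum
  · rintro ⟨n, m⟩ hnm
    have : n ≠ m := fun h => hnm ⟨n, by rw [h]⟩
    simp [this]

end KernelIntegral

theorem kernel_self_reproducing_property_general (q : ℝ) (hq0 : 0 < q) (hq1 : q < 1)
    (μ : Measure ℂ)
    (hmomInt : ∀ n m : ℕ, IntegrableOn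
      (fun ξ : ℂ => ξ ^ n * ((starRingEnd ℂ) ξ) ^ m * (((qexR q (‖ξ‖ ^ 2))⁻¹ : ℝ) : ℂ))
      {ξ : ℂ | ‖ξ‖ ^ 2 < 1 / (1 - q)} μ)
    (hmom : ∀ n m : ℕ,
      ∫ ξ in {ξ : ℂ | ‖ξ‖ ^ 2 < 1 / (1 - q)},
          ξ ^ n * ((starRingEnd ℂ) ξ) ^ m * (((qexR q (‖ξ‖ ^ 2))⁻¹ : ℝ) : ℂ) ∂μ =
        if n = m then ((Real.pi : ℝ) : ℂ) * (qfact q n : ℂ) else 0)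
    (b : ℕ → ℂ) (hb : Summable (fun n : ℕ => ‖b n‖))
    (f : ℂ → ℂ)
    (hf : ∀ ξ : ℂ, ‖ξ‖ ^ 2 < 1 / (1 - q) →
      f ξ = ∑' n : ℕ, b n * ξ ^ n / ((Real.sqrt (qfact q n) : ℝ) : ℂ))
    (z : ℂ) (hz : ‖z‖ ^ 2 < 1 / (1 - q)) :
    (∀ ξ : ℂ, ‖ξ‖ ^ 2 < 1 / (1 - q) →
      Summable (fun n : ℕ => ‖b n * ξ ^ n / ((Real.sqrt (qfact q n) : ℝ) : ℂ)‖)) ∧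
    IntegrableOn (fun ξ : ℂ => Kker q z ξ * f ξ) {ξ : ℂ | ‖ξ‖ ^ 2 < 1 / (1 - q)} μ ∧
    ∫ ξ in {ξ : ℂ | ‖ξ‖ ^ 2 < 1 / (1 - q)}, Kker q z ξ * f ξ ∂μ = f z := by
  set D := {ξ : ℂ | ‖ξ‖ ^ 2 < 1 / (1 - q)}
  set F : ℕ × ℕ → ℂ → ℂ := fun p ξ => kernelCoeff q b z p * qWeightedMonomial q p.1 p.2 ξ
  have hF_int : ∀ p, Integrable (F p) (μ.restrict D) := fun p => (hmomInt p.1 p.2).const_mul _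
  have hF_sum : Summable fun p => ∫ ξ, ‖F p ξ‖ ∂μ.restrict D :=
    summable_integral_norm_kernelCoeff_mul hq0.le hq1 hmomInt
      (fun n => (hmom n n).trans (if_pos rfl)) hb hz
  have hKf : (fun ξ => Kker q z ξ * f ξ) =ᵐ[μ.restrict D] fun ξ => ∑' p, F p ξ := by
    filter_upwards [ae_restrict_mem (measurableSet_lt (by fun_prop) measurable_const)]
      with ξ hξ
    rw [hf ξ hξ]
    exact (hasSum_kernelCoeff_mul_qWeightedMonomial hq0.le hq1 hb hz hξ).tsum_eq.symm
  refine ⟨fun ξ => summable_norm_mul_pow_div_sqrt_qfact hq0.le hq1 hb,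
    (integrable_tsum_of_summable_integral_norm hF_int hF_sum).congr hKf.symm, ?_⟩
  rw [integral_congr_ae hKf, hf z hz]
  exact (hasSum_integral_of_summable_integral_norm hF_int hF_sum).unique
    (hasSum_integral_kernelCoeff_mul hq0.le hq1 hmom hb hz)

/-- if a positive measure `μ` carried by the disc `D = {ξ : |ξ|² < R}`
satisfies the moment conditions `∫_D ξ^n conj(ξ)^m e_q(|ξ|²)^{-1} dμ = π [n]_q! δ_{nm}`,
and `f(ξ) = ∑ b(n) ξ^n/√([n]_q!)` with `∑ |b(n)| < ∞` (the series converging absolutely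
on `D`), then for every `z` with `|z|² < R` the function `ξ ↦ K(z,ξ) f(ξ)` is
`μ`-integrable on `D` and `∫_D K(z,ξ) f(ξ) dμ(ξ) = f(z)`. -/
theorem kernel_self_reproducing_property (q : ℝ) (hq0 : 0 < q) (hq1 : q < 1)
    (μ : Measure ℂ)
    (hcar : μ {ξ : ℂ | ¬ ‖ξ‖ ^ 2 < 1 / (1 - q)} = 0)
    (hmomInt : ∀ n m : ℕ, IntegrableOn
      (fun ξ : ℂ => ξ ^ n * ((starRingEnd ℂ) ξ) ^ m * (((qexR q (‖ξ‖ ^ 2))⁻¹ : ℝ) : ℂ))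
      {ξ : ℂ | ‖ξ‖ ^ 2 < 1 / (1 - q)} μ)
    (hmom : ∀ n m : ℕ,
      ∫ ξ in {ξ : ℂ | ‖ξ‖ ^ 2 < 1 / (1 - q)},
          ξ ^ n * ((starRingEnd ℂ) ξ) ^ m * (((qexR q (‖ξ‖ ^ 2))⁻¹ : ℝ) : ℂ) ∂μ =
        if n = m then ((Real.pi : ℝ) : ℂ) * (qfact q n : ℂ) else 0)
    (b : ℕ → ℂ) (hb : Summable (fun n : ℕ => ‖b n‖))
    (f : ℂ → ℂ)
    (hf : ∀ ξ : ℂ, ‖ξ‖ ^ 2 < 1 / (1 - q) →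
      f ξ = ∑' n : ℕ, b n * ξ ^ n / ((Real.sqrt (qfact q n) : ℝ) : ℂ))
    (z : ℂ) (hz : ‖z‖ ^ 2 < 1 / (1 - q)) :
    (∀ ξ : ℂ, ‖ξ‖ ^ 2 < 1 / (1 - q) →
      Summable (fun n : ℕ => ‖b n * ξ ^ n / ((Real.sqrt (qfact q n) : ℝ) : ℂ)‖)) ∧
    IntegrableOn (fun ξ : ℂ => Kker q z ξ * f ξ) {ξ : ℂ | ‖ξ‖ ^ 2 < 1 / (1 - q)} μ ∧
    ∫ ξ in {ξ : ℂ | ‖ξ‖ ^ 2 < 1 / (1 - q)}, Kker q z ξ * f ξ ∂μ = f z :=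
  kernel_self_reproducing_property_general q hq0 hq1 μ hmomInt hmom b hb f hf z hz
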